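/- Lemma 2, part 2: Let Φ be a field and let V and W be vector spaces over Φ. Let M = U(L(V))·W ⊆ L(V ⊕ W). Then, inside the universal enveloping algebra of the free Lie algebra L(V ⊕ W), one has U(L(V ⊕ W)) = U(L(V)) + U(L(M))·M·U(L(V)) as a sum of subspaces. -/

import Mathlib

variable (Φ : Type*) [Field Φ]

/-- The Lie ideal of linearity relations inside the free Lie algebra on the type
underlying a module, used to define the free Lie algebra on a module. -/
noncomputable def freeLieModuleRel (M : Type*) [AddCommGroup M] [Module Φ M] :
    LieIdeal Φ (FreeLieAlgebra Φ M) :=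
  LieSubmodule.lieSpan Φ _
    ({x | ∃ a b : M, x = FreeLieAlgebra.of Φ (a + b) - FreeLieAlgebra.of Φ a -
        FreeLieAlgebra.of Φ b} ∪
     {x | ∃ (c : Φ) (a : M), x = FreeLieAlgebra.of Φ (c • a) - c • FreeLieAlgebra.of Φ a})

/-- The free Lie algebra on a module `M`: the quotient of the free Lie algebra on the
type `M` by the linearity relations. -/
abbrev FreeLieModule (M : Type*) [AddCommGroup M] [Module Φ M] :=
  FreeLieAlgebra Φ M ⧸ freeLieModuleRel Φ M

/-- The canonical linear embedding of a module into the free Lie algebra on it. -/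
noncomputable def FreeLieModule.ι (M : Type*) [AddCommGroup M] [Module Φ M] :
    M →ₗ[Φ] FreeLieModule Φ M where
  toFun a := (freeLieModuleRel Φ M).toSubmodule.mkQ (FreeLieAlgebra.of Φ a)
  map_add' a b := by
    show (freeLieModuleRel Φ M).toSubmodule.mkQ (FreeLieAlgebra.of Φ (a + b)) =
      (freeLieModuleRel Φ M).toSubmodule.mkQ (FreeLieAlgebra.of Φ a) +
        (freeLieModuleRel Φ M).toSubmodule.mkQ (FreeLieAlgebra.of Φ b)
    rw [← sub_eq_zero, ← map_add, ← map_sub, Submodule.mkQ_apply,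
      Submodule.Quotient.mk_eq_zero]
    exact LieSubmodule.subset_lieSpan (Or.inl ⟨a, b, (sub_sub _ _ _).symm⟩)
  map_smul' c a := by
    show (freeLieModuleRel Φ M).toSubmodule.mkQ (FreeLieAlgebra.of Φ (c • a)) =
      c • (freeLieModuleRel Φ M).toSubmodule.mkQ (FreeLieAlgebra.of Φ a)
    rw [← sub_eq_zero, ← map_smul, ← map_sub, Submodule.mkQ_apply,
      Submodule.Quotient.mk_eq_zero]
    exact LieSubmodule.subset_lieSpan (Or.inr ⟨c, a, rfl⟩)

/-- The smallest subspace of a Lie algebra containing `s` and stable under the adjoint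
action of every element of `K`; when `K` is (the underlying set of) a Lie subalgebra `𝔨`
this is the `U(𝔨)`-submodule generated by `s`. -/
def adSpan {L : Type*} [LieRing L] [LieAlgebra Φ L] (K s : Set L) : Submodule Φ L :=
  sInf {P | s ⊆ P ∧ ∀ x ∈ K, ∀ p ∈ P, ⁅x, p⁆ ∈ P}

/-- The span of brackets `⁅p, q⁆` with `p ∈ P` and `q ∈ Q`. -/
def bracketSpan {L : Type*} [LieRing L] [LieAlgebra Φ L] (P Q : Submodule Φ L) :
    Submodule Φ L :=
  Submodule.span Φ {x | ∃ p ∈ P, ∃ q ∈ Q, x = ⁅p, q⁆}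

/-- The quotient map onto the quotient of a Lie algebra by an ideal, as a Lie algebra
homomorphism. -/
def lieQuotientMk {L : Type*} [LieRing L] [LieAlgebra Φ L] (I : LieIdeal Φ L) :
    L →ₗ⁅Φ⁆ L ⧸ I :=
  { I.toSubmodule.mkQ with map_lie' := fun {_ _} => rfl }

variable (V W : Type*) [AddCommGroup V] [Module Φ V] [AddCommGroup W] [Module Φ W]

/-- The canonical embedding of `V` into the free Lie algebra on `V ⊕ W`. -/
noncomputable def ιV : V →ₗ[Φ] FreeLieModule Φ (V × W) :=
  (FreeLieModule.ι Φ (V × W)).comp (LinearMap.inl Φ V W)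

/-- The canonical embedding of `W` into the free Lie algebra on `V ⊕ W`. -/
noncomputable def ιW : W →ₗ[Φ] FreeLieModule Φ (V × W) :=
  (FreeLieModule.ι Φ (V × W)).comp (LinearMap.inr Φ V W)

/-- The Lie subalgebra of `L(V ⊕ W)` generated by `V`; it is a copy of `L(V)`. -/
noncomputable def lieV : LieSubalgebra Φ (FreeLieModule Φ (V × W)) :=
  LieSubalgebra.lieSpan Φ _ (Set.range (ιV Φ V W))

/-- The subspace `M = U(L(V)) · W` of `L(V ⊕ W)`: the smallest subspace containing `W`
and stable under the adjoint action of the subalgebra `L(V)`. -/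
noncomputable def lazardM : Submodule Φ (FreeLieModule Φ (V × W)) :=
  adSpan Φ ↑(lieV Φ V W) (Set.range (ιW Φ V W))

/-- The Lie ideal of `L(V ⊕ W)` generated by `W`. -/
noncomputable def idealW : LieIdeal Φ (FreeLieModule Φ (V × W)) :=
  LieSubmodule.lieSpan Φ _ (Set.range (ιW Φ V W))

/-- The unital subalgebra of `U(L(V ⊕ W))` generated by the image of the subalgebra
`L(V) ⊆ L(V ⊕ W)`; it is a copy of `U(L(V))`. -/
noncomputable def envV : Subalgebra Φ (UniversalEnvelopingAlgebra Φ (FreeLieModule Φ (V × W))) :=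
  Algebra.adjoin Φ (UniversalEnvelopingAlgebra.ι Φ '' ((lieV Φ V W : Set (FreeLieModule Φ (V × W)))))

/-- The unital subalgebra of `U(L(V ⊕ W))` generated by the image of the ideal of
`L(V ⊕ W)` generated by `W`, the latter being identified with `L(M)` by Lazard's
elimination theorem; it is a copy of `U(L(M))`. -/
noncomputable def envM : Subalgebra Φ (UniversalEnvelopingAlgebra Φ (FreeLieModule Φ (V × W))) :=
  Algebra.adjoin Φ (UniversalEnvelopingAlgebra.ι Φ '' ((idealW Φ V W : Set (FreeLieModule Φ (V × W)))))

attribute [local instance 100] LieRing.ofAssociativeRing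

/-!
`U(L(V ⊕ W))` is generated as an algebra by `V` and `W`, so it suffices that
`P = U(L(V)) + U(L(M))·M·U(L(V))` contains `1` and is stable under left multiplication by `V`
and by `W`. For `w ∈ W ⊆ M ∩ L(M)` this is clear. For `x ∈ V` it follows from
`x·(u m v) = [x, u] m v + u [x, m] v + u m (x v)`: the ideal generated by `W` makes
`[x, U(L(M))] ⊆ U(L(M))`, and `M` is stable under `ad L(V)` by construction.
-/

namespace Submodule

variable {R A : Type*} [CommSemiring R] [Semiring A] [Algebra R A]

def leftStabilizer (P : Submodule R A) : Subalgebra R A where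
  carrier := {a | ∀ p ∈ P, a * p ∈ P}
  mul_mem' ha hb p hp := by rw [mul_assoc]; exact ha _ (hb p hp)
  add_mem' ha hb p hp := by rw [add_mul]; exact add_mem (ha p hp) (hb p hp)
  algebraMap_mem' r p hp := by
    rw [Algebra.algebraMap_eq_smul_one, smul_mul_assoc, one_mul]; exact P.smul_mem r hp

theorem mem_leftStabilizer {P : Submodule R A} {a : A} :
    a ∈ P.leftStabilizer ↔ ∀ p ∈ P, a * p ∈ P :=
  Iff.rfl

theorem eq_top_of_one_mem_of_leftStabilizer_eq_top {P : Submodule R A} (h1 : 1 ∈ P)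
    (h : P.leftStabilizer = ⊤) : P = ⊤ :=
  eq_top_iff.2 fun a _ => by
    simpa using mem_leftStabilizer.1 (h ▸ Algebra.mem_top : a ∈ P.leftStabilizer) 1 h1

theorem mem_leftStabilizer_sup_mul_mul {a : A} {P B C D : Submodule R A}
    (hP : ∀ p ∈ P, a * p ∈ P ⊔ B * C * D)
    (hBCD : ∀ b ∈ B, ∀ c ∈ C, ∀ d ∈ D, a * (b * c * d) ∈ P ⊔ B * C * D) :
    a ∈ (P ⊔ B * C * D).leftStabilizer := by
  suffices P ⊔ B * C * D ≤ (P ⊔ B * C * D).comap (LinearMap.mulLeft R a) from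
    fun p hp => this hp
  refine sup_le hP (mul_le.2 fun bc hbc d hd => ?_)
  have hBC : B * C ≤ ((P ⊔ B * C * D).comap (LinearMap.mulLeft R a)).comap
      (LinearMap.mulRight R d) :=
    mul_le.2 fun b hb c hc => hBCD b hb c hc d hd
  exact hBC hbc

end Submodule

theorem Algebra.lie_mem_adjoin {R A : Type*} [CommRing R] [Ring A] [Algebra R A] {s : Set A}
    {a u : A} (hs : ∀ y ∈ s, ⁅a, y⁆ ∈ adjoin R s) (hu : u ∈ adjoin R s) :
    ⁅a, u⁆ ∈ adjoin R s := by
  induction hu using adjoin_induction with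
  | mem y hy => exact hs y hy
  | algebraMap r => rw [Ring.lie_def, Algebra.commutes, sub_self]; exact zero_mem _
  | add x y _ _ hx hy => rw [lie_add]; exact add_mem hx hy
  | mul x y hx' hy' hx hy =>
    have h : ⁅a, x * y⁆ = ⁅a, x⁆ * y + x * ⁅a, y⁆ := by
      simp only [Ring.lie_def]; noncomm_ring
    rw [h]; exact add_mem (mul_mem hx hy') (mul_mem hx' hy)

theorem UniversalEnvelopingAlgebra.adjoin_range_ι (R L : Type*) [CommRing R] [LieRing L]
    [LieAlgebra R L] : Algebra.adjoin R (Set.range (ι R (L := L))) = ⊤ := by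
  have h : Set.range (ι R (L := L)) = mkAlgHom R L '' Set.range (TensorAlgebra.ι R) := by
    rw [← Set.range_comp]; rfl
  rw [h, ← AlgHom.map_adjoin, TensorAlgebra.adjoin_range_ι, Algebra.map_top,
    AlgHom.range_eq_top]
  exact RingCon.mkₐ_surjective (α := R) _

theorem FreeLieModule.lieSpan_range_ι (M : Type*) [AddCommGroup M] [Module Φ M] :
    LieSubalgebra.lieSpan Φ _ (Set.range (FreeLieModule.ι Φ M)) = ⊤ := by
  set K := LieSubalgebra.lieSpan Φ _ (Set.range (FreeLieModule.ι Φ M))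
  let F : FreeLieAlgebra Φ M →ₗ⁅Φ⁆ K :=
    FreeLieAlgebra.lift Φ fun a =>
      ⟨FreeLieModule.ι Φ M a, LieSubalgebra.subset_lieSpan ⟨a, rfl⟩⟩
  have hF : lieQuotientMk Φ (freeLieModuleRel Φ M) = K.incl.comp F :=
    FreeLieAlgebra.hom_ext fun a => by
      rw [LieHom.comp_apply, FreeLieAlgebra.lift_of_apply]; rfl
  refine eq_top_iff.2 fun x _ => ?_
  obtain ⟨y, rfl⟩ := Submodule.mkQ_surjective (freeLieModuleRel Φ M).toSubmodule x
  change lieQuotientMk Φ (freeLieModuleRel Φ M) y ∈ K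
  rw [hF]
  exact (F y).2

section adSpan

variable {L : Type*} [LieRing L] [LieAlgebra Φ L] {K s : Set L}

theorem subset_adSpan : s ⊆ adSpan Φ K s :=
  fun _ hx => Submodule.mem_sInf.2 fun _ hP => hP.1 hx

theorem lie_mem_adSpan {x p : L} (hx : x ∈ K) (hp : p ∈ adSpan Φ K s) :
    ⁅x, p⁆ ∈ adSpan Φ K s :=
  Submodule.mem_sInf.2 fun P hP => hP.2 x hx p (Submodule.mem_sInf.1 hp P hP)

end adSpan

theorem lieSpan_range_ιV_union_range_ιW :
    LieSubalgebra.lieSpan Φ _ (Set.range (ιV Φ V W) ∪ Set.range (ιW Φ V W)) = ⊤ := by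
  rw [eq_top_iff, ← FreeLieModule.lieSpan_range_ι, LieSubalgebra.lieSpan_le]
  rintro _ ⟨⟨v, w⟩, rfl⟩
  have h : FreeLieModule.ι Φ (V × W) (v, w) = ιV Φ V W v + ιW Φ V W w := by
    simp [ιV, ιW, ← map_add]
  rw [h]
  exact add_mem (LieSubalgebra.subset_lieSpan (Or.inl ⟨v, rfl⟩))
    (LieSubalgebra.subset_lieSpan (Or.inr ⟨w, rfl⟩))

section Lazard

variable {Φ V W}

local notation "𝔘" => UniversalEnvelopingAlgebra Φ (FreeLieModule Φ (V × W))
local notation "ι" => UniversalEnvelopingAlgebra.ι Φ (L := FreeLieModule Φ (V × W))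

theorem subalgebra_eq_top_of_ιV_mem_of_ιW_mem {S : Subalgebra Φ 𝔘}
    (hV : ∀ v, ι (ιV Φ V W v) ∈ S) (hW : ∀ w, ι (ιW Φ V W w) ∈ S) : S = ⊤ := by
  have hK : ⊤ ≤ (lieSubalgebraOfSubalgebra Φ 𝔘 S).comap ι := by
    rw [← lieSpan_range_ιV_union_range_ιW, LieSubalgebra.lieSpan_le]
    rintro _ (⟨v, rfl⟩ | ⟨w, rfl⟩)
    exacts [hV v, hW w]
  rw [eq_top_iff, ← UniversalEnvelopingAlgebra.adjoin_range_ι, Algebra.adjoin_le_iff]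
  rintro _ ⟨x, rfl⟩
  exact hK (LieSubalgebra.mem_top x)

theorem lie_ι_mem_envM (x : FreeLieModule Φ (V × W)) {u : 𝔘} (hu : u ∈ envM Φ V W) :
    ⁅ι x, u⁆ ∈ envM Φ V W := by
  refine Algebra.lie_mem_adjoin ?_ hu
  rintro _ ⟨z, hz, rfl⟩
  rw [← LieHom.map_lie]
  exact Algebra.subset_adjoin ⟨⁅x, z⁆, (idealW Φ V W).lie_mem hz, rfl⟩

variable (Φ V W) in
noncomputable abbrev lazardMImage : Submodule Φ 𝔘 :=
  Submodule.map (ι : FreeLieModule Φ (V × W) →ₗ⁅Φ⁆ 𝔘).toLinearMap (lazardM Φ V W)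

variable (Φ V W) in
noncomputable abbrev lazardSum : Submodule Φ 𝔘 :=
  Subalgebra.toSubmodule (envV Φ V W) ⊔
    Subalgebra.toSubmodule (envM Φ V W) * lazardMImage Φ V W *
      Subalgebra.toSubmodule (envV Φ V W)

theorem one_mem_lazardSum : (1 : 𝔘) ∈ lazardSum Φ V W :=
  Submodule.mem_sup_left (one_mem (envV Φ V W))

theorem mem_lazardSum_of_mem {u m v : 𝔘} (hu : u ∈ envM Φ V W)
    (hm : m ∈ lazardMImage Φ V W) (hv : v ∈ envV Φ V W) : u * m * v ∈ lazardSum Φ V W :=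
  Submodule.mem_sup_right (Submodule.mul_mem_mul (Submodule.mul_mem_mul hu hm) hv)

theorem ι_ιW_mem_leftStabilizer_lazardSum (w : W) :
    ι (ιW Φ V W w) ∈ (lazardSum Φ V W).leftStabilizer := by
  have hwM : ι (ιW Φ V W w) ∈ lazardMImage Φ V W :=
    ⟨ιW Φ V W w, subset_adSpan Φ ⟨w, rfl⟩, rfl⟩
  have hwE : ι (ιW Φ V W w) ∈ envM Φ V W :=
    Algebra.subset_adjoin ⟨ιW Φ V W w, LieSubmodule.subset_lieSpan ⟨w, rfl⟩, rfl⟩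
  refine Submodule.mem_leftStabilizer_sup_mul_mul (fun a ha => ?_) fun u hu m hm v hv => ?_
  · simpa using mem_lazardSum_of_mem (one_mem _) hwM ha
  · convert mem_lazardSum_of_mem (mul_mem hwE hu) hm hv using 1
    noncomm_ring

theorem ι_ιV_mem_leftStabilizer_lazardSum (v₀ : V) :
    ι (ιV Φ V W v₀) ∈ (lazardSum Φ V W).leftStabilizer := by
  set x := ιV Φ V W v₀
  have hxL : x ∈ lieV Φ V W := LieSubalgebra.subset_lieSpan ⟨v₀, rfl⟩
  have hxE : ι x ∈ envV Φ V W := Algebra.subset_adjoin ⟨x, hxL, rfl⟩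
  refine Submodule.mem_leftStabilizer_sup_mul_mul (fun a ha => ?_) fun u hu m hm v hv => ?_
  · exact Submodule.mem_sup_left (Subalgebra.mul_mem _ hxE ha)
  · have hxm : ⁅ι x, m⁆ ∈ lazardMImage Φ V W := by
      obtain ⟨m, hm, rfl⟩ := hm
      exact ⟨⁅x, m⁆, lie_mem_adSpan Φ hxL hm, LieHom.map_lie ..⟩
    have hexpand : ι x * (u * m * v) =
        ⁅ι x, u⁆ * m * v + u * ⁅ι x, m⁆ * v + u * m * (ι x * v) := by
      simp only [Ring.lie_def]; noncomm_ring
    rw [hexpand]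
    exact add_mem (add_mem (mem_lazardSum_of_mem (lie_ι_mem_envM x hu) hm hv)
      (mem_lazardSum_of_mem hu hxm hv))
      (mem_lazardSum_of_mem hu hm (Subalgebra.mul_mem _ hxE hv))

end Lazard

/-- **Lemma 2, part 2.** Inside the universal enveloping algebra of `L(V ⊕ W)`, one has
`U(L(V ⊕ W)) = U(L(V)) + U(L(M)) · M · U(L(V))` as a sum of subspaces, where `M` denotes
the image of `M = U(L(V)) · W` under the canonical map `L(V ⊕ W) → U(L(V ⊕ W))`. -/
theorem env_eq_envV_add_envM_mul_M_mul_envV :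
    Subalgebra.toSubmodule (envV Φ V W) ⊔
      Subalgebra.toSubmodule (envM Φ V W) *
        Submodule.map (UniversalEnvelopingAlgebra.ι Φ).toLinearMap (lazardM Φ V W) *
        Subalgebra.toSubmodule (envV Φ V W) = ⊤ :=
  Submodule.eq_top_of_one_mem_of_leftStabilizer_eq_top one_mem_lazardSum <|
    subalgebra_eq_top_of_ιV_mem_of_ιW_mem ι_ιV_mem_leftStabilizer_lazardSum
      ι_ιW_mem_leftStabilizer_lazardSum
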